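/- arXiv:1303.6615 — 2 statements merged into one kernel-verified Lean document; each statement's English description precedes it below -/
import Mathlib

section
/- Let v : ℝ → E (a normed space) be twice continuously differentiable with ‖v''(s)‖ ≤ K for s ∈ [0, ΔT], and let ρ : [0,1] → ℝ be continuous with ∫₀¹ ρ(s) ds = 1. Then ‖(1/ΔT)∫₀^{ΔT} ρ(s/ΔT) v'(s) ds − v'(0)‖ ≤ K ΔT ∫₀¹ |ρ(s)| s ds. -/
/-!
Rescaling `t = ΔT u` turns the moving average into `∫₀¹ ρ(u) v'(ΔT u) du`, and since `∫₀¹ ρ = 1`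
its distance to `v'(0)` is `‖∫₀¹ ρ(u) (v'(ΔT u) - v'(0)) du‖`. The mean value inequality for `v'`
bounds `‖v'(ΔT u) - v'(0)‖` by `K ΔT u`, which gives the weight `|ρ(u)| u`.
-/

open Set

section

variable {E : Type*} [NormedAddCommGroup E] [NormedSpace ℝ E]

theorem norm_deriv_sub_deriv_le_of_norm_iteratedDeriv_two_le {v : ℝ → E} (hv : ContDiff ℝ 2 v)
    {a b K : ℝ} (hK : ∀ s ∈ Icc a b, ‖iteratedDeriv 2 v s‖ ≤ K) :
    ∀ y ∈ Icc a b, ‖deriv v y - deriv v a‖ ≤ K * (y - a) := by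
  have hdiff : Differentiable ℝ (deriv v) := by
    simpa only [iteratedDeriv_one] using hv.differentiable_iteratedDeriv 1 (by norm_num)
  refine norm_image_sub_le_of_norm_deriv_le_segment'
    (fun x _ => (hdiff x).hasDerivAt.hasDerivWithinAt) fun x hx => ?_
  simpa only [iteratedDeriv_succ, iteratedDeriv_zero] using hK x (Ico_subset_Icc_self hx)

theorem inv_smul_integral_kernel_comp_div {T : ℝ} (hT : T ≠ 0) (ρ : ℝ → ℝ) (g : ℝ → E) :
    T⁻¹ • ∫ t in (0:ℝ)..T, ρ (t / T) • g t = ∫ u in (0:ℝ)..1, ρ u • g (T * u) := by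
  simpa only [mul_div_cancel₀ _ hT, zero_div, div_self hT] using
    intervalIntegral.inv_smul_integral_comp_div (a := 0) (b := T) (fun u => ρ u • g (T * u)) T

theorem norm_integral_kernel_smul_sub_le [CompleteSpace E] {ρ : ℝ → ℝ} {w : ℝ → E} {L : ℝ}
    (hρ : ContinuousOn ρ (Icc 0 1)) (hw : ContinuousOn w (Icc 0 1))
    (hρ_one : ∫ u in (0:ℝ)..1, ρ u = 1) (hLip : ∀ u ∈ Icc (0:ℝ) 1, ‖w u - w 0‖ ≤ L * u) :
    ‖(∫ u in (0:ℝ)..1, ρ u • w u) - w 0‖ ≤ L * ∫ u in (0:ℝ)..1, |ρ u| * u := by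
  rw [← uIcc_of_le zero_le_one] at hρ hw
  have hρw : IntervalIntegrable (fun u => ρ u • w u) MeasureTheory.volume 0 1 :=
    (hρ.smul hw).intervalIntegrable
  have hρw0 : IntervalIntegrable (fun u => ρ u • w 0) MeasureTheory.volume 0 1 :=
    (hρ.smul continuousOn_const).intervalIntegrable
  have hweight : IntervalIntegrable (fun u => L * (|ρ u| * u)) MeasureTheory.volume 0 1 :=
    (continuousOn_const.mul (hρ.abs.mul continuousOn_id)).intervalIntegrable
  calc ‖(∫ u in (0:ℝ)..1, ρ u • w u) - w 0‖
      = ‖∫ u in (0:ℝ)..1, ρ u • (w u - w 0)‖ := by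
        simp only [smul_sub]
        rw [intervalIntegral.integral_sub hρw hρw0, intervalIntegral.integral_smul_const,
          hρ_one, one_smul]
    _ ≤ ∫ u in (0:ℝ)..1, L * (|ρ u| * u) := by
        refine intervalIntegral.norm_integral_le_of_norm_le zero_le_one
          (Filter.Eventually.of_forall fun u hu => ?_) hweight
        rw [norm_smul, Real.norm_eq_abs, mul_left_comm]
        exact mul_le_mul_of_nonneg_left (hLip u (Ioc_subset_Icc_self hu)) (abs_nonneg _)
    _ = L * ∫ u in (0:ℝ)..1, |ρ u| * u := intervalIntegral.integral_const_mul _ _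

end

theorem moving_average_derivative_error
    {E : Type*} [NormedAddCommGroup E] [NormedSpace ℝ E] [CompleteSpace E]
    (v : ℝ → E) (hv : ContDiff ℝ 2 v)
    (K ΔT : ℝ) (hΔT : 0 < ΔT)
    (hK : ∀ s ∈ Icc (0:ℝ) ΔT, ‖iteratedDeriv 2 v s‖ ≤ K)
    (ρ : ℝ → ℝ) (hρ : ContinuousOn ρ (Icc 0 1))
    (hnorm : ∫ u in (0:ℝ)..1, ρ u = 1) :
    ‖ΔT⁻¹ • (∫ t in (0:ℝ)..ΔT, ρ (t / ΔT) • deriv v t) - deriv v 0‖ ≤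
      K * ΔT * ∫ u in (0:ℝ)..1, |ρ u| * u := by
  rw [inv_smul_integral_kernel_comp_div hΔT.ne']
  have hcont : ContinuousOn (fun u => deriv v (ΔT * u)) (Icc 0 1) :=
    ((hv.continuous_deriv one_le_two).comp (continuous_const_mul ΔT)).continuousOn
  have hgrowth : ∀ u ∈ Icc (0:ℝ) 1, ‖deriv v (ΔT * u) - deriv v (ΔT * 0)‖ ≤ K * ΔT * u := by
    intro u hu
    have hmem : ΔT * u ∈ Icc 0 ΔT :=
      ⟨mul_nonneg hΔT.le hu.1, mul_le_of_le_one_right hΔT.le hu.2⟩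
    simpa only [mul_zero, sub_zero, mul_assoc] using
      norm_deriv_sub_deriv_le_of_norm_iteratedDeriv_two_le hv hK _ hmem
  simpa only [mul_zero] using norm_integral_kernel_smul_sub_le hρ hcont hnorm hgrowth
end

section
/- Induction step of the parareal error bound: under assumptions (i)–(iii) of the abstract parareal setup, the errors satisfy ‖u(T_n) − U_nᵏ‖_{B_j} ≤ (1 + C_j ΔT)‖u(T_{n−1}) − U_{n−1}ᵏ‖_{B_j} + C_j(ΔT^{p+1} + ε)‖u(T_{n−1}) − U_{n−1}^{k−1}‖_{B_{j+1}}. -/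
theorem parareal_step_sub_eq {E : Type*} [AddCommGroup E] (φ φb φt : E → E) (x y z : E) :
    φ x - (φt y + (φ z - φt z)) =
      (φt x - φt y) + ((φ x - φb x) - (φ z - φb z)) + ((φb x - φt x) - (φb z - φt z)) := by
  abel

theorem le_add_add_of_subadditive {E : Type*} [Add E] {f : E → ℝ}
    (hf : ∀ x y, f (x + y) ≤ f x + f y) (a b c : E) : f (a + b + c) ≤ f a + f b + f c :=
  (hf _ _).trans (add_le_add_left (hf a b) _)

theorem parareal_error_induction_step_general
    {E : Type*} [AddCommGroup E]
    (nrm : ℕ → E → ℝ)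
    (hnrm_tri : ∀ j x y, nrm j (x + y) ≤ nrm j x + nrm j y)
    (φ φb φt : E → E)
    (C : ℕ → ℝ)
    (ε ΔT : ℝ) (p : ℕ)
    (hLip : ∀ j u v, nrm j (φt u - φt v) ≤ (1 + C j * ΔT) * nrm j (u - v))
    (hEφ : ∀ j u v,
      nrm j ((φ u - φb u) - (φ v - φb v)) ≤ ε * C j * nrm (j + 1) (u - v))
    (hEφt : ∀ j u v,
      nrm j ((φb u - φt u) - (φb v - φt v)) ≤ C j * ΔT ^ (p + 1) * nrm (j + 1) (u - v))
    (u : ℕ → E) (hu : ∀ n, u (n + 1) = φ (u n))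
    (U : ℕ → ℕ → E)
    (hUrec : ∀ k n, U (k + 1) (n + 1) =
      φt (U (k + 1) n) + (φ (U k n) - φt (U k n))) :
    ∀ j k n, nrm j (u (n + 1) - U (k + 1) (n + 1)) ≤
      (1 + C j * ΔT) * nrm j (u n - U (k + 1) n) +
        C j * (ΔT ^ (p + 1) + ε) * nrm (j + 1) (u n - U k n) := by
  intro j k n
  rw [hu, hUrec, parareal_step_sub_eq]
  refine (le_add_add_of_subadditive (hnrm_tri j) _ _ _).trans ?_
  linarith [hLip j (u n) (U (k + 1) n), hEφ j (u n) (U k n), hEφt j (u n) (U k n)]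

/-- Induction step of the parareal error bound, on a scale of norms `nrm j`. -/
theorem parareal_error_induction_step
    {E : Type*} [AddCommGroup E]
    (nrm : ℕ → E → ℝ)
    (hnrm_nonneg : ∀ j x, 0 ≤ nrm j x)
    (hnrm_tri : ∀ j x y, nrm j (x + y) ≤ nrm j x + nrm j y)
    (hnrm_neg : ∀ j x, nrm j (-x) = nrm j x)
    (φ φb φt : E → E)
    (C : ℕ → ℝ) (hC : ∀ j, 0 < C j)
    (ε ΔT : ℝ) (hε : 0 < ε) (hΔT : 0 < ΔT) (p : ℕ)
    (hLip : ∀ j u v, nrm j (φt u - φt v) ≤ (1 + C j * ΔT) * nrm j (u - v))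
    (hEφ : ∀ j u v,
      nrm j ((φ u - φb u) - (φ v - φb v)) ≤ ε * C j * nrm (j + 1) (u - v))
    (hEφt : ∀ j u v,
      nrm j ((φb u - φt u) - (φb v - φt v)) ≤ C j * ΔT ^ (p + 1) * nrm (j + 1) (u - v))
    (u₀ : E) (u : ℕ → E) (hu0 : u 0 = u₀) (hu : ∀ n, u (n + 1) = φ (u n))
    (U : ℕ → ℕ → E)
    (hU0 : ∀ k, U k 0 = u₀)
    (hUrec : ∀ k n, U (k + 1) (n + 1) =
      φt (U (k + 1) n) + (φ (U k n) - φt (U k n))) :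
    ∀ j k n, nrm j (u (n + 1) - U (k + 1) (n + 1)) ≤
      (1 + C j * ΔT) * nrm j (u n - U (k + 1) n) +
        C j * (ΔT ^ (p + 1) + ε) * nrm (j + 1) (u n - U k n) :=
  parareal_error_induction_step_general nrm hnrm_tri φ φb φt C ε ΔT p hLip hEφ hEφt u hu U hUrec
end
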